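/- For every prime power q and integers ℓ > k ≥ 1, there exists an integer m ≥ ℓ such that, with M = M_{k×m}(F_q) and any R-submodule X ⊆ M with dim X = m − ℓ, the map E' has nontrivial kernel: there exists a nonzero function ξ : S_{=ℓ} → ℚ with E'(ξ)(U) = 0 for every U ∈ S_{<ℓ}. -/

import Mathlib

variable (F : Type) [Field F] [Fintype F] (k m : ℕ)

/-- The matrix module `M = M_{k×m}(F)` as a left module over `R = M_{k×k}(F)`
via matrix multiplication. -/
instance matSMul : SMul (Matrix (Fin k) (Fin k) F) (Matrix (Fin k) (Fin m) F) :=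
  ⟨fun A X => A * X⟩

instance matModule : Module (Matrix (Fin k) (Fin k) F) (Matrix (Fin k) (Fin m) F) where
  one_smul X := Matrix.one_mul X
  mul_smul A B X := Matrix.mul_assoc A B X
  smul_zero A := Matrix.mul_zero A
  smul_add A X Y := Matrix.mul_add A X Y
  add_smul A B X := Matrix.add_mul A B X
  zero_smul X := Matrix.zero_mul X

instance matTower :
    IsScalarTower F (Matrix (Fin k) (Fin k) F) (Matrix (Fin k) (Fin m) F) :=
  ⟨fun c A X => Matrix.smul_mul c A X⟩

noncomputable instance :
    Fintype (Submodule (Matrix (Fin k) (Fin k) F) (Matrix (Fin k) (Fin m) F)) :=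
  Fintype.ofFinite _

/-- The dimension of an `R`-submodule `U ⊆ M`, i.e. `dim_{F_q}(U) / k`. -/
noncomputable def dimk
    (U : Submodule (Matrix (Fin k) (Fin k) F) (Matrix (Fin k) (Fin m) F)) : ℕ :=
  Module.finrank F (U.restrictScalars F) / k

open Classical in
/-- `η_V(U) = (−1)^(dim V − dim U) · q^(binom(dim V − dim U, 2))` if `U ⊆ V`, else `0`. -/
noncomputable def etaV
    (V U : Submodule (Matrix (Fin k) (Fin k) F) (Matrix (Fin k) (Fin m) F)) : ℚ :=
  if U ≤ V then
    (-1 : ℚ) ^ (dimk F k m V - dimk F k m U) *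
      (Fintype.card F : ℚ) ^ ((dimk F k m V - dimk F k m U).choose 2)
  else 0

/-!
Reading off rows identifies the `M_k(F_q)`-submodules of `M_{k×m}(F_q)` with the subspaces of
`F_q^m`, and `dim` with the ordinary dimension. So `S_{=ℓ}` contains the `q^(ℓ(m-ℓ))` complements
of the subspace corresponding to `X`, while `S_{<ℓ}` has at most `q^(m(ℓ-1))` elements, every
subspace of dimension `< ℓ` being the range of a linear map `F_q^(ℓ-1) → F_q^m`. For `m > ℓ²` the
first number is the larger, so the linear map `E'` has more unknowns than equations, whatever `η` is.
-/

section Counting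

variable {K E : Type*} [Field K] [AddCommGroup E] [Module K E] [FiniteDimensional K E]

noncomputable def Submodule.projEquivLinearMapOfIsCompl {p q : Submodule K E} (h : IsCompl p q) :
    {f : E →ₗ[K] p // ∀ x : p, f x = x} ≃ (q →ₗ[K] p) where
  toFun f := f.1 ∘ₗ q.subtype
  invFun g := ⟨LinearMap.ofIsCompl h LinearMap.id g, LinearMap.ofIsCompl_apply_left h⟩
  left_inv f := Subtype.ext <| LinearMap.ofIsCompl_eq h (fun x => (f.2 x).symm) fun _ => rfl
  right_inv _ := LinearMap.ext <| LinearMap.ofIsCompl_apply_right h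

theorem Submodule.natCard_isCompl (p : Submodule K E) :
    Nat.card {q // IsCompl p q} =
      Nat.card K ^ ((Module.finrank K E - Module.finrank K p) * Module.finrank K p) := by
  obtain ⟨q, hq⟩ := p.exists_isCompl
  rw [Nat.card_congr (p.isComplEquivProj.trans (projEquivLinearMapOfIsCompl hq)),
    Module.natCard_eq_pow_finrank (K := K), Module.finrank_linearMap,
    ← Submodule.finrank_add_eq_of_isCompl hq, Nat.add_sub_cancel_left]

theorem Submodule.exists_linearMap_range_eq {d : ℕ} (W : Submodule K E)
    (hW : Module.finrank K W ≤ d) : ∃ f : (Fin d → K) →ₗ[K] E, LinearMap.range f = W := by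
  obtain ⟨i, hi⟩ := finrank_le_iff_exists_linearMap.mp
    (hW.trans (Module.finrank_fin_fun K).ge)
  obtain ⟨g, hg⟩ := i.exists_leftInverse_of_injective (LinearMap.ker_eq_bot.mpr hi)
  have hg_surj : Function.Surjective g := fun w => ⟨i w, LinearMap.congr_fun hg w⟩
  refine ⟨W.subtype ∘ₗ g, ?_⟩
  rw [LinearMap.range_comp, LinearMap.range_eq_top.mpr hg_surj, Submodule.map_top,
    Submodule.range_subtype]

theorem Submodule.natCard_finrank_le [Finite K] (d : ℕ) :
    Nat.card {W : Submodule K E // Module.finrank K W ≤ d} ≤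
      Nat.card K ^ (d * Module.finrank K E) := by
  have hsurj : Function.Surjective fun f : (Fin d → K) →ₗ[K] E =>
      (⟨LinearMap.range f, (LinearMap.finrank_range_le f).trans (Module.finrank_fin_fun K).le⟩ :
        {W : Submodule K E // Module.finrank K W ≤ d}) := by
    rintro ⟨W, hW⟩
    obtain ⟨f, hf⟩ := W.exists_linearMap_range_eq hW
    exact ⟨f, Subtype.ext hf⟩
  have : Finite ((Fin d → K) →ₗ[K] E) := Module.finite_of_finite K
  calc _ ≤ Nat.card ((Fin d → K) →ₗ[K] E) := Nat.card_le_card_of_surjective _ hsurj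
    _ = _ := by
      rw [Module.natCard_eq_pow_finrank (K := K), Module.finrank_linearMap, Module.finrank_fin_fun]

end Counting

theorem exists_ne_zero_forall_sum_mul_eq_zero {K α β : Type*} [Field K] [Fintype α] [Fintype β]
    (η : α → β → K) (h : Fintype.card β < Fintype.card α) :
    ∃ ξ : α → K, ξ ≠ 0 ∧ ∀ b, ∑ a, ξ a * η a b = 0 := by
  have hdep : ¬LinearIndependent K η := fun hli => by
    have := hli.fintype_card_le_finrank
    rw [Module.finrank_fintype_fun_eq_card] at this
    omega
  obtain ⟨ξ, hξ, a, ha⟩ := Fintype.not_linearIndependent_iff.mp hdep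
  exact ⟨ξ, fun h0 => ha (congrFun h0 a), fun b => by simpa using congrFun hξ b⟩

section RowCorrespondence

variable {K : Type} [Field K] {k m : ℕ}

def rowMod (W : Submodule K (Fin m → K)) :
    Submodule (Matrix (Fin k) (Fin k) K) (Matrix (Fin k) (Fin m) K) where
  carrier := {A | ∀ i, A i ∈ W}
  add_mem' hA hB i := W.add_mem (hA i) (hB i)
  zero_mem' _ := W.zero_mem
  smul_mem' B A hA i := by
    change (B * A) i ∈ W
    rw [Matrix.mul_apply_eq_vecMul, Matrix.vecMul_eq_sum]
    exact W.sum_mem fun j _ => W.smul_mem _ (hA j)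

theorem mem_rowMod {W : Submodule K (Fin m → K)} {A : Matrix (Fin k) (Fin m) K} :
    A ∈ rowMod W ↔ ∀ i, A i ∈ W := Iff.rfl

theorem Matrix.single_one_mul_eq_pi_single (r i : Fin k) (A : Matrix (Fin k) (Fin m) K) :
    Matrix.single r i (1 : K) * A = Pi.single r (A i) := by
  ext a b
  by_cases h : a = r <;> simp [Matrix.single, Matrix.mul_apply, h, Ne.symm]

def rowSpace (U : Submodule (Matrix (Fin k) (Fin k) K) (Matrix (Fin k) (Fin m) K)) :
    Submodule K (Fin m → K) :=
  ⨅ r, (U.restrictScalars K).comap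
    ((Matrix.ofLinearEquiv K).toLinearMap ∘ₗ LinearMap.single K (fun _ => Fin m → K) r)

theorem mem_rowSpace {U : Submodule (Matrix (Fin k) (Fin k) K) (Matrix (Fin k) (Fin m) K)}
    {w : Fin m → K} : w ∈ rowSpace U ↔ ∀ r, (Pi.single r w : Matrix (Fin k) (Fin m) K) ∈ U := by
  simp only [rowSpace, Submodule.mem_iInf]
  rfl

theorem rowMod_rowSpace (U : Submodule (Matrix (Fin k) (Fin k) K) (Matrix (Fin k) (Fin m) K)) :
    rowMod (rowSpace U) = U := by
  ext A
  simp only [mem_rowMod, mem_rowSpace]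
  refine ⟨fun h => ?_, fun hA i r => Matrix.single_one_mul_eq_pi_single r i A ▸ U.smul_mem _ hA⟩
  rw [← Finset.univ_sum_single A]
  exact U.sum_mem fun r _ => h r r

theorem rowSpace_rowMod (hk : 0 < k) (W : Submodule K (Fin m → K)) :
    rowSpace (rowMod W : Submodule _ (Matrix (Fin k) (Fin m) K)) = W := by
  ext w
  simp only [mem_rowSpace]
  refine ⟨fun h => by simpa using h ⟨0, hk⟩ ⟨0, hk⟩, fun hw r i => ?_⟩
  rcases eq_or_ne i r with rfl | hir
  · simpa using hw
  · simp [hir, W.zero_mem]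

def rowModLinearEquiv (W : Submodule K (Fin m → K)) :
    (rowMod W : Submodule _ (Matrix (Fin k) (Fin m) K)).restrictScalars K ≃ₗ[K] (Fin k → W) where
  toFun A i := ⟨A.1 i, A.2 i⟩
  invFun f := ⟨fun i => f i, fun i => (f i).2⟩
  map_add' _ _ := rfl
  map_smul' _ _ := rfl
  left_inv _ := rfl
  right_inv _ := rfl

theorem dimk_rowMod (hk : 0 < k) (W : Submodule K (Fin m → K)) :
    dimk K k m (rowMod W) = Module.finrank K W := by
  rw [dimk, (rowModLinearEquiv W).finrank_eq, Module.finrank_pi_fintype, Finset.sum_const,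
    Finset.card_univ, Fintype.card_fin, smul_eq_mul, Nat.mul_div_cancel_left _ hk]

-- Morita equivalence between `M_k(K)` and `K`, made explicit.
def rowModOrderIso (hk : 0 < k) :
    Submodule K (Fin m → K) ≃o Submodule (Matrix (Fin k) (Fin k) K) (Matrix (Fin k) (Fin m) K) :=
  Equiv.toOrderIso ⟨rowMod, rowSpace, rowSpace_rowMod hk, rowMod_rowSpace⟩
    (fun _ _ h _ hA i => h (hA i))
    (fun _ _ h _ hw => mem_rowSpace.mpr fun r => h (mem_rowSpace.mp hw r))

theorem dimk_eq_finrank_rowModOrderIso_symm (hk : 0 < k)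
    (U : Submodule (Matrix (Fin k) (Fin k) K) (Matrix (Fin k) (Fin m) K)) :
    dimk K k m U = Module.finrank K ((rowModOrderIso hk).symm U) := by
  conv_lhs => rw [← (rowModOrderIso hk).apply_symm_apply U]
  exact dimk_rowMod hk _

variable (K) in
theorem natCard_dimk_lt_le [Finite K] (hk : 0 < k) (l : ℕ) :
    Nat.card {U : Submodule (Matrix (Fin k) (Fin k) K) (Matrix (Fin k) (Fin m) K) //
      dimk K k m U < l} ≤ Nat.card K ^ ((l - 1) * m) := by
  have hinj : Function.Injective fun U : {U // dimk K k m U < l} =>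
      (⟨(rowModOrderIso hk).symm U, by
        have := U.2
        rw [dimk_eq_finrank_rowModOrderIso_symm hk] at this
        omega⟩ : {W : Submodule K (Fin m → K) // Module.finrank K W ≤ l - 1}) :=
    fun U U' h => Subtype.ext ((rowModOrderIso hk).symm.injective (congrArg Subtype.val h))
  calc _ ≤ _ := Nat.card_le_card_of_injective _ hinj
    _ ≤ _ := by simpa using Submodule.natCard_finrank_le (K := K) (E := Fin m → K) (l - 1)

theorem pow_le_natCard_dimk_eq_inf_eq_bot [Finite K] (hk : 0 < k) {l : ℕ} (hlm : l ≤ m)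
    (X : Submodule (Matrix (Fin k) (Fin k) K) (Matrix (Fin k) (Fin m) K))
    (hX : dimk K k m X = m - l) :
    Nat.card K ^ (l * (m - l)) ≤
      Nat.card {V : Submodule (Matrix (Fin k) (Fin k) K) (Matrix (Fin k) (Fin m) K) //
        dimk K k m V = l ∧ V ⊓ X = ⊥} := by
  let e := rowModOrderIso (K := K) (m := m) hk
  have hW : Module.finrank K (e.symm X) = m - l := by
    rw [← hX, dimk_eq_finrank_rowModOrderIso_symm hk]
  have hcompl := (e.symm X).natCard_isCompl
  rw [Module.finrank_fin_fun, hW, Nat.sub_sub_self hlm] at hcompl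
  rw [← hcompl]
  refine Nat.card_le_card_of_injective
    (fun q => ⟨e q, ?_, ?_⟩) fun q q' h => Subtype.ext (e.injective (congrArg Subtype.val h))
  · have := Submodule.finrank_add_eq_of_isCompl q.2
    rw [Module.finrank_fin_fun, hW] at this
    rw [dimk_eq_finrank_rowModOrderIso_symm hk, e.symm_apply_apply]
    omega
  · have hbot : e (q ⊓ e.symm X) = ⊥ := by rw [q.2.symm.inf_eq_bot, e.map_bot]
    rwa [e.map_inf, e.apply_symm_apply] at hbot

end RowCorrespondence

theorem pred_mul_lt_mul_sub {l m : ℕ} (hl : 0 < l) (hm : l * l < m) : (l - 1) * m < l * (m - l) := by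
  have hlm : l ≤ m := by nlinarith
  obtain ⟨n, rfl⟩ : ∃ n, l = n + 1 := ⟨l - 1, by omega⟩
  obtain ⟨t, rfl⟩ : ∃ t, m = t + (n + 1) := ⟨m - (n + 1), by omega⟩
  rw [Nat.add_sub_cancel, Nat.add_sub_cancel]
  nlinarith

open Classical in
theorem exists_m_ker_E'_nontrivial (hk : 0 < k) (l : ℕ) (hl : l > k) :
    ∃ m : ℕ, m ≥ l ∧
      ∀ X : Submodule (Matrix (Fin k) (Fin k) F) (Matrix (Fin k) (Fin m) F),
        dimk F k m X = m - l →
        ∃ ξ : {V : Submodule (Matrix (Fin k) (Fin k) F) (Matrix (Fin k) (Fin m) F) //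
                 dimk F k m V = l ∧ V ⊓ X = ⊥} → ℚ,
          ξ ≠ 0 ∧
          ∀ U : Submodule (Matrix (Fin k) (Fin k) F) (Matrix (Fin k) (Fin m) F),
            dimk F k m U < l → U ⊓ X = ⊥ →
            ∑ V : {V : Submodule (Matrix (Fin k) (Fin k) F) (Matrix (Fin k) (Fin m) F) //
                     dimk F k m V = l ∧ V ⊓ X = ⊥},
              ξ V * etaV F k m (V : Submodule (Matrix (Fin k) (Fin k) F) (Matrix (Fin k) (Fin m) F)) U = 0 := by
  have hl₀ : 0 < l := by omega
  have hm : l * l < l * l + 1 := Nat.lt_succ_self _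
  refine ⟨l * l + 1, by nlinarith, fun X hX => ?_⟩
  -- more unknowns `ξ V` than equations, one for each `U`
  have hcard : Fintype.card {U // dimk F k (l * l + 1) U < l ∧ U ⊓ X = ⊥} <
      Fintype.card {V // dimk F k (l * l + 1) V = l ∧ V ⊓ X = ⊥} := by
    simp only [← Nat.card_eq_fintype_card]
    calc _ ≤ Nat.card {U // dimk F k (l * l + 1) U < l} :=
          Finite.card_le_of_embedding (Subtype.impEmbedding _ _ fun _ => And.left)
      _ ≤ Nat.card F ^ ((l - 1) * (l * l + 1)) := natCard_dimk_lt_le F hk l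
      _ < Nat.card F ^ (l * (l * l + 1 - l)) :=
          Nat.pow_lt_pow_right Finite.one_lt_card (pred_mul_lt_mul_sub hl₀ hm)
      _ ≤ _ := pow_le_natCard_dimk_eq_inf_eq_bot hk (by nlinarith) X hX
  obtain ⟨ξ, hξ, hker⟩ := exists_ne_zero_forall_sum_mul_eq_zero (fun V U => etaV F k _ V.1 U.1) hcard
  exact ⟨ξ, hξ, fun U hU hUX => hker ⟨U, hU, hUX⟩⟩
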